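/- For the symmetric algorithm: in every fair execution, if at some step the shared variable turn is assigned the value a (either by process a itself at state 3.5.2, or by some process setting turn:=nextTurn=a when moving to state 8 while process a waits at state 2 or 4), then process a eventually enters the critical section. -/

import Mathlib

/-!
Model of the symmetric mutual-exclusion algorithm (no coordinator).

Shared variables: `turn ∈ {0,…,N−1, THINKING, FREE}` (initially FREE) and
`flag : Fin N → {REMAINDER, WAITING, CANDIDATE}` (initially all REMAINDER,
`flag[i]` writable only by process `i`).

Entry automaton for process `i` (program-counter states):
* `s1`   : set `flag[i] := WAITING`, go to `s2`;
* `s2`   : wait while `turn = THINKING`; if `turn = FREE` go to `s3`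
           (beginning of the candidate phase); if `turn` is a process
           identifier, go to `s4`;
* `s3`   : set `flag[i] := CANDIDATE`, go to `s32` (state 3.2);
* `s32`  : repeat-loop test: if `turn = FREE ∧ flag[i] = CANDIDATE`
           go to `s33` (state 3.3), otherwise leave the loop to `s37`;
* `s33`  : set `nCandidates := 0`, `minCandidate := −1`, initialize the scan
           counter, go to `s34`;
* `s34`  : scan loop (states 3.4/3.4.1/3.4.2), `j` from `N−1` down to `0`:
           if the scan is over, go to `s35`; otherwise inspect `flag[j]`:
           if it is CANDIDATE go to `s341` else decrement `j`;
* `s341` : set `nCandidates := nCandidates + 1`, `minCandidate := j`,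
           decrement `j`, back to `s34`;
* `s35`  : if `turn = FREE ∧ nCandidates = 1` go to `s351` (state 3.5.1),
           otherwise go to `s36`;
* `s351` : set `turn := i`, go to `s352` (state 3.5.2);
* `s352` : go to `s36`;
* `s36`  : if `turn ≠ FREE ∨ minCandidate < i` set `flag[i] := WAITING`
           (state 3.6); in either case return to the repeat test `s32`;
* `s37`  : after the repeat ends, set `flag[i] := WAITING`, go to `s4`;
* `s4`   : wait until `turn = i`, then enter the critical section `cs`.

Exit automaton for process `i`:
* `cs`   : set `turn := THINKING`, go to `s5` (state 5);
* `s5`   : set `flag[i] := REMAINDER`, `nextTurn := THINKING`, initialize the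
           scan counter, go to `s6`;
* `s6`   : loop (states 6/6.1/6.2) with `j` over `i+1,…,N−1,0,…,i−1` while
           `nextTurn = THINKING`: if `flag[j] ≠ REMAINDER` set
           `nextTurn := j`; when the loop ends go to `s63` (state 6.3);
* `s63`  : if `nextTurn = THINKING` set `turn := FREE` else
           `turn := nextTurn`; go to `s8` (state 8).
-/

namespace Sym

/-- Values of the shared variable `turn` (and of `nextTurn`). -/
inductive Turn (N : ℕ)
  | free
  | thinking
  | id : Fin N → Turn N
  deriving DecidableEq

inductive Flag
  | remainder | waiting | candidate
  deriving DecidableEq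

/-- Program counter of a process. -/
inductive PC
  | s1 | s2 | s3 | s32 | s33 | s34 | s341 | s35 | s351 | s352 | s36 | s37
  | s4 | cs | s5 | s6 | s63 | s8
  deriving DecidableEq

/-- A global state: shared variables plus each process's program counter and
local variables (`cnt` is the loop counter `j`, reused by the candidate scan
and the exit scan). -/
structure St (N : ℕ) where
  turn : Turn N
  flag : Fin N → Flag
  pc : Fin N → PC
  nCand : Fin N → ℕ
  minCand : Fin N → ℤ
  nextTurn : Fin N → Turn N
  cnt : Fin N → ℕ

/-- The initial global state. -/
def initSt (N : ℕ) : St N where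
  turn := .free
  flag := fun _ => .remainder
  pc := fun _ => .s1
  nCand := fun _ => 0
  minCand := fun _ => 0
  nextTurn := fun _ => .thinking
  cnt := fun _ => 0

/-- In the exit scan of process `i`, the index examined when the counter is
`k` is `(i + k + 1) mod N`: the scan order is `i+1, …, N−1, 0, …, i−1`. -/
def nxt {N : ℕ} (i : Fin N) (k : ℕ) : Fin N :=
  ⟨(i.val + k + 1) % N, Nat.mod_lt _ i.pos⟩

/-- One enabled transition of process `i`. -/
inductive Step {N : ℕ} : Fin N → St N → St N → Prop
  | t1 (s : St N) (i : Fin N) (h : s.pc i = .s1) :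
      Step i s { s with flag := Function.update s.flag i .waiting,
                        pc := Function.update s.pc i .s2 }
  | t2free (s : St N) (i : Fin N) (h : s.pc i = .s2) (ht : s.turn = .free) :
      Step i s { s with pc := Function.update s.pc i .s3 }
  | t2id (s : St N) (i j : Fin N) (h : s.pc i = .s2) (ht : s.turn = .id j) :
      Step i s { s with pc := Function.update s.pc i .s4 }
  | t3 (s : St N) (i : Fin N) (h : s.pc i = .s3) :
      Step i s { s with flag := Function.update s.flag i .candidate,
                        pc := Function.update s.pc i .s32 }
  | t32enter (s : St N) (i : Fin N) (h : s.pc i = .s32)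
      (ht : s.turn = .free) (hf : s.flag i = .candidate) :
      Step i s { s with pc := Function.update s.pc i .s33 }
  | t32exit (s : St N) (i : Fin N) (h : s.pc i = .s32)
      (hc : ¬ (s.turn = .free ∧ s.flag i = .candidate)) :
      Step i s { s with pc := Function.update s.pc i .s37 }
  | t33 (s : St N) (i : Fin N) (h : s.pc i = .s33) :
      Step i s { s with nCand := Function.update s.nCand i 0,
                        minCand := Function.update s.minCand i (-1),
                        cnt := Function.update s.cnt i N,
                        pc := Function.update s.pc i .s34 }
  | t34done (s : St N) (i : Fin N) (h : s.pc i = .s34) (hc : s.cnt i = 0) :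
      Step i s { s with pc := Function.update s.pc i .s35 }
  | t34cand (s : St N) (i j : Fin N) (h : s.pc i = .s34) (hc : s.cnt i ≠ 0)
      (hj : (j : ℕ) = s.cnt i - 1) (hf : s.flag j = .candidate) :
      Step i s { s with pc := Function.update s.pc i .s341 }
  | t34nocand (s : St N) (i j : Fin N) (h : s.pc i = .s34) (hc : s.cnt i ≠ 0)
      (hj : (j : ℕ) = s.cnt i - 1) (hf : s.flag j ≠ .candidate) :
      Step i s { s with cnt := Function.update s.cnt i (s.cnt i - 1),
                        pc := Function.update s.pc i .s34 }
  | t341 (s : St N) (i : Fin N) (h : s.pc i = .s341) :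
      Step i s { s with nCand := Function.update s.nCand i (s.nCand i + 1),
                        minCand := Function.update s.minCand i ((s.cnt i : ℤ) - 1),
                        cnt := Function.update s.cnt i (s.cnt i - 1),
                        pc := Function.update s.pc i .s34 }
  | t35yes (s : St N) (i : Fin N) (h : s.pc i = .s35)
      (ht : s.turn = .free) (hn : s.nCand i = 1) :
      Step i s { s with pc := Function.update s.pc i .s351 }
  | t35no (s : St N) (i : Fin N) (h : s.pc i = .s35)
      (hc : ¬ (s.turn = .free ∧ s.nCand i = 1)) :
      Step i s { s with pc := Function.update s.pc i .s36 }
  | t351 (s : St N) (i : Fin N) (h : s.pc i = .s351) :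
      Step i s { s with turn := .id i, pc := Function.update s.pc i .s352 }
  | t352 (s : St N) (i : Fin N) (h : s.pc i = .s352) :
      Step i s { s with pc := Function.update s.pc i .s36 }
  | t36yes (s : St N) (i : Fin N) (h : s.pc i = .s36)
      (hc : s.turn ≠ .free ∨ s.minCand i < (i : ℤ)) :
      Step i s { s with flag := Function.update s.flag i .waiting,
                        pc := Function.update s.pc i .s32 }
  | t36no (s : St N) (i : Fin N) (h : s.pc i = .s36)
      (hc : ¬ (s.turn ≠ .free ∨ s.minCand i < (i : ℤ))) :
      Step i s { s with pc := Function.update s.pc i .s32 }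
  | t37 (s : St N) (i : Fin N) (h : s.pc i = .s37) :
      Step i s { s with flag := Function.update s.flag i .waiting,
                        pc := Function.update s.pc i .s4 }
  | t4 (s : St N) (i : Fin N) (h : s.pc i = .s4) (ht : s.turn = .id i) :
      Step i s { s with pc := Function.update s.pc i .cs }
  | tcs (s : St N) (i : Fin N) (h : s.pc i = .cs) :
      Step i s { s with turn := .thinking, pc := Function.update s.pc i .s5 }
  | t5 (s : St N) (i : Fin N) (h : s.pc i = .s5) :
      Step i s { s with flag := Function.update s.flag i .remainder,
                        nextTurn := Function.update s.nextTurn i .thinking,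
                        cnt := Function.update s.cnt i 0,
                        pc := Function.update s.pc i .s6 }
  | t6exit (s : St N) (i : Fin N) (h : s.pc i = .s6)
      (hc : s.nextTurn i ≠ .thinking ∨ s.cnt i = N - 1) :
      Step i s { s with pc := Function.update s.pc i .s63 }
  | t6found (s : St N) (i : Fin N) (h : s.pc i = .s6)
      (hnt : s.nextTurn i = .thinking) (hcnt : s.cnt i ≠ N - 1)
      (hf : s.flag (nxt i (s.cnt i)) ≠ .remainder) :
      Step i s { s with
        nextTurn := Function.update s.nextTurn i (.id (nxt i (s.cnt i))),
        cnt := Function.update s.cnt i (s.cnt i + 1),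
        pc := Function.update s.pc i .s6 }
  | t6notfound (s : St N) (i : Fin N) (h : s.pc i = .s6)
      (hnt : s.nextTurn i = .thinking) (hcnt : s.cnt i ≠ N - 1)
      (hf : s.flag (nxt i (s.cnt i)) = .remainder) :
      Step i s { s with cnt := Function.update s.cnt i (s.cnt i + 1),
                        pc := Function.update s.pc i .s6 }
  | t63free (s : St N) (i : Fin N) (h : s.pc i = .s63)
      (hn : s.nextTurn i = .thinking) :
      Step i s { s with turn := .free, pc := Function.update s.pc i .s8 }
  | t63id (s : St N) (i b : Fin N) (h : s.pc i = .s63)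
      (hn : s.nextTurn i = .id b) :
      Step i s { s with turn := .id b, pc := Function.update s.pc i .s8 }

/-- An execution: a sequence of global states starting from the initial
state, together with a schedule; at each instant either exactly one process
takes one of its enabled transitions, or (if `none` is scheduled) the state
stutters. -/
structure Exec (N : ℕ) where
  states : ℕ → St N
  sched : ℕ → Option (Fin N)
  init : states 0 = initSt N
  step : ∀ n, match sched n with
    | some i => Step i (states n) (states (n + 1))
    | none => states (n + 1) = states n

/-- A process is enabled if it can take a transition. -/
def Enabled {N : ℕ} (i : Fin N) (s : St N) : Prop :=
  ∃ s', Step i s s'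

/-- Weak fairness: a process whose next transition is continuously enabled
eventually takes it. -/
def Exec.Fair {N : ℕ} (e : Exec N) : Prop :=
  ∀ i n, (∀ m, n ≤ m → Enabled i (e.states m)) → ∃ m, n ≤ m ∧ e.sched m = some i

/-- A state is reachable if it occurs in some execution. -/
def Reachable {N : ℕ} (s : St N) : Prop :=
  ∃ e : Exec N, ∃ n, e.states n = s

/-- The extended critical section: program-counter states in `[CS, 8)`. -/
def ExtCS : PC → Prop := fun p => p = .cs ∨ p = .s5 ∨ p = .s6 ∨ p = .s63

/-- Program-counter states in the interval `[3, 4]`: from entering the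
candidate phase up to (and including) waiting at state 4. -/
def In34 : PC → Prop := fun p =>
  p = .s3 ∨ p = .s32 ∨ p = .s33 ∨ p = .s34 ∨ p = .s341 ∨ p = .s35 ∨
  p = .s351 ∨ p = .s352 ∨ p = .s36 ∨ p = .s37 ∨ p = .s4

/-- Position of `x` in the cyclic order `a+1, …, N−1, 0, …, a−1, a`
starting just after `a` (so `rank a (a+1) = 0` and `rank a a = N−1`). -/
def rank {N : ℕ} (a x : Fin N) : ℕ := (x.val + N - a.val - 1) % N

end Sym

/-!
Only a process at 3.5.1, in the CS or at 6.3 writes `turn`. Call a process privileged when it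
is at 3.5.1, 3.5.2 or in the extended critical section; the invariant `Inv` says that at most one
process is privileged and that `turn` agrees with its position (`FREE` or its own id at 3.5.x,
its id in the CS, `THINKING` at 5–6.3). Mutual exclusion at 3.5.1 rests on a counting argument:
of two processes whose scans have read each other's flag, one counted the other, so they cannot
both have found exactly one candidate. Hence once `turn := a` is written no other process is
privileged, `turn = a` persists, and `a` stays enabled on its path to the CS
(3.5.2 → 3.6 → 3.2 → 3.7 → 4, or 2 → 4); weak fairness moves it along.
-/

namespace Sym

variable {N : ℕ}

theorem Exec.step_of_sched_eq_some (e : Exec N) {m : ℕ} {q : Fin N} (h : e.sched m = some q) :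
    Step q (e.states m) (e.states (m + 1)) := by
  simpa [h] using e.step m

theorem Exec.step_or_stutter (e : Exec N) (m : ℕ) :
    (∃ q, Step q (e.states m) (e.states (m + 1))) ∨ e.states (m + 1) = e.states m := by
  have hstep := e.step m
  cases h : e.sched m with
  | none => simp only [h] at hstep; exact Or.inr hstep
  | some q => simp only [h] at hstep; exact Or.inl ⟨q, hstep⟩

theorem Exec.forall_of_stable (e : Exec N) {P : St N → Prop} (hinit : P (initSt N))
    (hP : ∀ q s s', P s → Step q s s' → P s') (m : ℕ) : P (e.states m) := by
  induction m with
  | zero => rwa [e.init]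
  | succ m ih =>
    rcases e.step_or_stutter m with ⟨q, hs⟩ | hs
    · exact hP q _ _ ih hs
    · rwa [hs]

theorem Exec.Fair.exists_of_progress {e : Exec N} (hfair : e.Fair) {a : Fin N}
    {P Q : St N → Prop} (r : St N → ℕ)
    (hstep : ∀ q s s', P s → Step q s s' →
      Q s' ∨ (P s' ∧ r s' ≤ r s ∧ (q = a → r s' < r s)))
    (hen : ∀ s, P s → Enabled a s) {n : ℕ} (hn : P (e.states n)) :
    ∃ m, n ≤ m ∧ Q (e.states m) := by
  induction hr : r (e.states n) using Nat.strong_induction_on generalizing n with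
  | _ k ih =>
  by_contra! hQ
  have hP : ∀ m, n ≤ m → P (e.states m) ∧ r (e.states m) ≤ k := by
    intro m hm
    induction m, hm using Nat.le_induction with
    | base => exact ⟨hn, hr.le⟩
    | succ m hm ihm =>
      rcases e.step_or_stutter m with ⟨q, hs⟩ | hs
      · rcases hstep q _ _ ihm.1 hs with hQ' | ⟨hP', hr', -⟩
        · exact absurd hQ' (hQ (m + 1) (by omega))
        · exact ⟨hP', hr'.trans ihm.2⟩
      · rwa [hs]
  obtain ⟨m, hm, hsched⟩ := hfair a n fun m hm => hen _ (hP m hm).1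
  rcases hstep a _ _ (hP m hm).1 (e.step_of_sched_eq_some hsched) with hQ' | ⟨hP', -, hlt⟩
  · exact hQ (m + 1) (by omega) hQ'
  · obtain ⟨m', hm', hQ'⟩ := ih _ ((hlt rfl).trans_le (hP m hm).2) hP' rfl
    exact hQ m' (by omega) hQ'

def InScan (p : PC) : Prop :=
  p = .s34 ∨ p = .s341 ∨ p = .s35 ∨ p = .s351 ∨ p = .s352

/-- The scan of process `i` reads the flags `N-1, …, 0`; at `s341` the flag at `cnt i - 1` has
been read (and is counted by `score`) but `cnt i` is not yet decremented. -/
def Examined (s : St N) (i x : Fin N) : Prop :=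
  (s.pc i = .s34 ∧ s.cnt i ≤ x) ∨ (s.pc i = .s341 ∧ s.cnt i ≤ x + 1) ∨
    s.pc i = .s35 ∨ s.pc i = .s351 ∨ s.pc i = .s352

instance (s : St N) (i x : Fin N) : Decidable (Examined s i x) := by
  unfold Examined; infer_instance

def score (s : St N) (i : Fin N) : ℕ :=
  if s.pc i = .s341 then s.nCand i + 1 else s.nCand i

section Frame

variable {q k : Fin N} {s s' : St N}

theorem Step.pc_of_ne (hs : Step q s s') (hk : k ≠ q) : s'.pc k = s.pc k := by
  cases hs <;> simp [Function.update_of_ne hk]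

theorem Step.flag_of_ne (hs : Step q s s') (hk : k ≠ q) : s'.flag k = s.flag k := by
  cases hs <;> simp [Function.update_of_ne hk]

theorem Step.cnt_of_ne (hs : Step q s s') (hk : k ≠ q) : s'.cnt k = s.cnt k := by
  cases hs <;> simp [Function.update_of_ne hk]

theorem Step.nCand_of_ne (hs : Step q s s') (hk : k ≠ q) : s'.nCand k = s.nCand k := by
  cases hs <;> simp [Function.update_of_ne hk]

theorem Step.examined_of_ne (hs : Step q s s') (hk : k ≠ q) (x : Fin N) :
    Examined s' k x ↔ Examined s k x := by
  simp only [Examined, hs.pc_of_ne hk, hs.cnt_of_ne hk]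

theorem Step.score_of_ne (hs : Step q s s') (hk : k ≠ q) : score s' k = score s k := by
  simp only [score, hs.pc_of_ne hk, hs.nCand_of_ne hk]

end Frame

theorem Step.scan_progress {i : Fin N} {s s' : St N} (hs : Step i s s')
    (hscan : InScan (s'.pc i)) :
    (s.pc i = .s33 ∧ ∀ x, ¬ Examined s' i x) ∨
    (InScan (s.pc i) ∧ (∀ x, Examined s' i x ↔ Examined s i x) ∧ score s' i = score s i) ∨
    (InScan (s.pc i) ∧ ∃ j, (∀ x, Examined s' i x ↔ Examined s i x ∨ x = j) ∧
      score s' i = score s i + if s.flag j = .candidate then 1 else 0) := by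
  cases hs with
  | t33 _ _ h => exact Or.inl ⟨h, fun x => by simp [Examined, x.isLt]⟩
  | t34done _ _ h hc => exact Or.inr (Or.inl ⟨by simp [InScan, h], by simp [Examined, h, hc],
      by simp [score, h]⟩)
  | t34cand _ _ j h hc hj hf =>
    refine Or.inr (Or.inr ⟨by simp [InScan, h], j, fun x => ?_, by simp [score, h, hf]⟩)
    simp only [Examined, h, Function.update_self, Fin.ext_iff, true_and, false_and,
      reduceCtorEq, false_or, or_false]
    omega
  | t34nocand _ _ j h hc hj hf =>
    refine Or.inr (Or.inr ⟨by simp [InScan, h], j, fun x => ?_, by simp [score, h, hf]⟩)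
    simp only [Examined, h, Function.update_self, Fin.ext_iff, tsub_le_iff_right, true_and,
      false_and, reduceCtorEq, or_false]
    omega
  | t341 _ _ h => exact Or.inr (Or.inl ⟨by simp [InScan, h], fun x => by
      simp [Examined, h], by simp [score, h]⟩)
  | t35yes _ _ h => exact Or.inr (Or.inl ⟨by simp [InScan, h], by simp [Examined, h],
      by simp [score, h]⟩)
  | t351 _ _ h => exact Or.inr (Or.inl ⟨by simp [InScan, h], by simp [Examined, h],
      by simp [score, h]⟩)
  | _ => simp [InScan] at hscan

structure ScanInv (s : St N) : Prop where
  flag_candidate : ∀ i, s.pc i = .s33 ∨ InScan (s.pc i) → s.flag i = .candidate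
  self_counted : ∀ i, InScan (s.pc i) → Examined s i i → 1 ≤ score s i
  /-- Of two processes that have read each other's flag, the second reader counted the first,
  whose flag stays `candidate` throughout its scan; the indicators are the processes counting
  themselves. -/
  pair_counted : ∀ A B, A ≠ B → InScan (s.pc A) → InScan (s.pc B) →
    Examined s A B → Examined s B A →
    (if Examined s A A then 1 else 0) + (if Examined s B B then 1 else 0) < score s A + score s B
  nCand_eq_one : ∀ i, s.pc i = .s351 ∨ s.pc i = .s352 → s.nCand i = 1

namespace ScanInv

variable {q : Fin N} {s s' : St N}

theorem init : ScanInv (initSt N) where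
  flag_candidate := by simp [initSt, InScan]
  self_counted := by simp [initSt, InScan]
  pair_counted := by simp [initSt, InScan]
  nCand_eq_one := by simp [initSt]

theorem self_le_score (h : ScanInv s) {i : Fin N} (hi : InScan (s.pc i)) :
    (if Examined s i i then 1 else 0) ≤ score s i := by
  split_ifs with he
  · exact h.self_counted i hi he
  · exact Nat.zero_le _

theorem flag_candidate_step (h : ScanInv s) (hs : Step q s s') (i : Fin N)
    (hi : s'.pc i = .s33 ∨ InScan (s'.pc i)) : s'.flag i = .candidate := by
  by_cases hiq : i = q
  · subst hiq
    have := h.flag_candidate i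
    cases hs <;> simp_all [InScan]
  · rw [hs.flag_of_ne hiq]
    exact h.flag_candidate i (hs.pc_of_ne hiq ▸ hi)

theorem nCand_eq_one_step (h : ScanInv s) (hs : Step q s s') (i : Fin N)
    (hi : s'.pc i = .s351 ∨ s'.pc i = .s352) : s'.nCand i = 1 := by
  by_cases hiq : i = q
  · subst hiq
    have := h.nCand_eq_one i
    cases hs <;> simp_all
  · rw [hs.nCand_of_ne hiq]
    exact h.nCand_eq_one i (hs.pc_of_ne hiq ▸ hi)

theorem self_counted_step (h : ScanInv s) (hs : Step q s s') (i : Fin N)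
    (hi : InScan (s'.pc i)) (he : Examined s' i i) : 1 ≤ score s' i := by
  by_cases hiq : i = q
  · subst hiq
    rcases hs.scan_progress hi with ⟨-, hnone⟩ | ⟨hi₀, hex, hsc⟩ | ⟨hi₀, j, hex, hsc⟩
    · exact absurd he (hnone i)
    · exact hsc ▸ h.self_counted i hi₀ ((hex i).1 he)
    · rcases (hex i).1 he with he₀ | rfl
      · exact (h.self_counted i hi₀ he₀).trans (hsc ▸ Nat.le_add_right _ _)
      · simp [hsc, h.flag_candidate i (Or.inr hi₀)]
  · rw [hs.score_of_ne hiq]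
    exact h.self_counted i (hs.pc_of_ne hiq ▸ hi) ((hs.examined_of_ne hiq i).1 he)

theorem pair_counted_step_left (h : ScanInv s) (hs : Step q s s') {B : Fin N} (hqB : q ≠ B)
    (hq : InScan (s'.pc q)) (hB : InScan (s'.pc B)) (hqb : Examined s' q B)
    (hbq : Examined s' B q) :
    (if Examined s' q q then 1 else 0) + (if Examined s' B B then 1 else 0) <
      score s' q + score s' B := by
  have hBq := hqB.symm
  rw [hs.pc_of_ne hBq] at hB
  simp only [hs.examined_of_ne hBq, hs.score_of_ne hBq] at hbq ⊢
  have hB_le := h.self_le_score hB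
  rcases hs.scan_progress hq with ⟨-, hnone⟩ | ⟨hq₀, hex, hsc⟩ | ⟨hq₀, j, hex, hsc⟩
  · exact absurd hqb (hnone B)
  · simp only [hex, hsc]
    exact h.pair_counted q B hqB hq₀ hB ((hex B).1 hqb) hbq
  · have hq_le := h.self_le_score hq₀
    rw [hsc]
    by_cases hjB : j = B
    · subst hjB
      have hqq : Examined s' q q ↔ Examined s q q := by simp [hex, hqB]
      simp only [hqq, h.flag_candidate j (Or.inr hB), if_true]
      omega
    · have hold := h.pair_counted q B hqB hq₀ hB (by simpa [hex, Ne.symm hjB] using hqb) hbq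
      by_cases hjq : j = q
      · subst hjq
        simp only [h.flag_candidate j (Or.inr hq₀), if_true]
        split_ifs at hold ⊢ <;> omega
      · have hqq : Examined s' q q ↔ Examined s q q := by simp [hex, Ne.symm hjq]
        simp only [hqq]
        split_ifs at hold ⊢ <;> omega

theorem step (h : ScanInv s) (hs : Step q s s') : ScanInv s' where
  flag_candidate := h.flag_candidate_step hs
  self_counted := h.self_counted_step hs
  nCand_eq_one := h.nCand_eq_one_step hs
  pair_counted A B hAB hA hB hab hba := by
    by_cases hAq : A = q
    · subst hAq
      exact h.pair_counted_step_left hs hAB hA hB hab hba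
    by_cases hBq : B = q
    · subst hBq
      rw [add_comm, add_comm (score s' A)]
      exact h.pair_counted_step_left hs (Ne.symm hAB) hB hA hba hab
    simp only [hs.examined_of_ne hAq, hs.examined_of_ne hBq, hs.score_of_ne hAq,
      hs.score_of_ne hBq] at hab hba ⊢
    exact h.pair_counted A B hAB (hs.pc_of_ne hAq ▸ hA) (hs.pc_of_ne hBq ▸ hB) hab hba

theorem not_two_done (h : ScanInv s) {k q : Fin N} (hkq : k ≠ q)
    (hk : s.pc k = .s351 ∨ s.pc k = .s352) (hq : s.pc q = .s35) (hn : s.nCand q = 1) :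
    False := by
  have hk' : InScan (s.pc k) := by rcases hk with hk | hk <;> simp [InScan, hk]
  have hdone : ∀ x, Examined s k x := fun x => by rcases hk with hk | hk <;> simp [Examined, hk]
  have hqdone : ∀ x, Examined s q x := fun x => by simp [Examined, hq]
  have hsk : score s k = 1 := by
    have := h.nCand_eq_one k hk
    rcases hk with hpc | hpc <;> simp [score, hpc, this]
  have hsq : score s q = 1 := by simp [score, hq, hn]
  have := h.pair_counted k q hkq hk' (by simp [InScan, hq]) (hdone q) (hqdone k)
  simp only [hdone, hqdone, if_true, hsk, hsq] at this
  omega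

end ScanInv

def Privileged (p : PC) : Prop :=
  p = .s351 ∨ p = .s352 ∨ p = .cs ∨ p = .s5 ∨ p = .s6 ∨ p = .s63

def TurnFits (i : Fin N) : PC → Turn N → Prop
  | .s351, t | .s352, t => t = .free ∨ t = .id i
  | .cs, t => t = .id i
  | .s5, t | .s6, t | .s63, t => t = .thinking
  | _, _ => True

theorem TurnFits.of_not_privileged {i : Fin N} {p : PC} (hp : ¬ Privileged p) (t : Turn N) :
    TurnFits i p t := by
  cases p <;> simp_all [Privileged, TurnFits]

theorem TurnFits.eq_of_id {i a : Fin N} {p : PC} (h : TurnFits i p (.id a))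
    (hp : Privileged p) : i = a := by
  rcases hp with rfl | rfl | rfl | rfl | rfl | rfl <;> simp_all [TurnFits, eq_comm]

theorem TurnFits.of_free {i : Fin N} {p : PC} (h : TurnFits i p .free) (hp : Privileged p) :
    p = .s351 ∨ p = .s352 := by
  rcases hp with rfl | rfl | rfl | rfl | rfl | rfl <;> simp_all [TurnFits]

theorem Step.turn_of_not_privileged {q : Fin N} {s s' : St N} (hs : Step q s s')
    (hq : ¬ Privileged (s.pc q)) : s'.turn = s.turn := by
  cases hs <;> simp_all [Privileged]

theorem Step.privileged_entry {q : Fin N} {s s' : St N} (hs : Step q s s')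
    (hq : ¬ Privileged (s.pc q)) (hq' : Privileged (s'.pc q)) :
    (s.pc q = .s35 ∧ s.turn = .free ∧ s.nCand q = 1 ∧ s'.pc q = .s351) ∨
      (s.turn = .id q ∧ s'.pc q = .cs) := by
  cases hs <;> simp_all [Privileged]

structure Inv (s : St N) : Prop extends ScanInv s where
  turn_fits : ∀ i, TurnFits i (s.pc i) s.turn
  privileged_unique : ∀ i j, Privileged (s.pc i) → Privileged (s.pc j) → i = j

namespace Inv

variable {q : Fin N} {s s' : St N}

theorem init : Inv (initSt N) where
  toScanInv := ScanInv.init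
  turn_fits i := TurnFits.of_not_privileged (by simp [initSt, Privileged]) _
  privileged_unique := by simp [initSt, Privileged]

theorem not_privileged_of_turn (h : Inv s) {a k : Fin N} (ht : s.turn = .id a) (hk : k ≠ a) :
    ¬ Privileged (s.pc k) := fun hp => hk ((ht ▸ h.turn_fits k).eq_of_id hp)

theorem step_of_privileged (h : Inv s) (hs : Step q s s') (hq : Privileged (s.pc q)) :
    Inv s' := by
  have hothers : ∀ k, k ≠ q → ¬ Privileged (s'.pc k) := fun k hk hp =>
    hk (h.privileged_unique k q (hs.pc_of_ne hk ▸ hp) hq)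
  refine ⟨h.toScanInv.step hs, fun i => ?_, fun i j hi hj => ?_⟩
  · by_cases hiq : i = q
    · subst hiq
      have := h.turn_fits i
      cases hs <;> simp_all [Privileged, TurnFits]
    · exact TurnFits.of_not_privileged (hothers i hiq) _
  · by_contra hij
    by_cases hiq : i = q
    · exact hothers j (fun hjq => hij (hiq.trans hjq.symm)) hj
    · exact hothers i hiq hi

theorem step_of_not_privileged (h : Inv s) (hs : Step q s s') (hq : ¬ Privileged (s.pc q)) :
    Inv s' := by
  have hturn := hs.turn_of_not_privileged hq
  have hentry : Privileged (s'.pc q) → ∀ k, k ≠ q → ¬ Privileged (s.pc k) := by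
    intro hq' k hk hp
    rcases hs.privileged_entry hq hq' with ⟨hpc, hfree, hn, -⟩ | ⟨hid, -⟩
    · exact h.not_two_done hk ((hfree ▸ h.turn_fits k).of_free hp) hpc hn
    · exact h.not_privileged_of_turn hid hk hp
  refine ⟨h.toScanInv.step hs, fun i => ?_, fun i j hi hj => ?_⟩
  · rw [hturn]
    by_cases hiq : i = q
    · subst hiq
      by_cases hi' : Privileged (s'.pc i)
      · rcases hs.privileged_entry hq hi' with ⟨-, hfree, -, hpc⟩ | ⟨hid, hpc⟩
        · simp [hpc, hfree, TurnFits]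
        · simp [hpc, hid, TurnFits]
      · exact TurnFits.of_not_privileged hi' _
    · exact hs.pc_of_ne hiq ▸ h.turn_fits i
  · by_cases hiq : i = q
    · by_contra hij
      subst hiq
      exact hentry hi j (Ne.symm hij) (hs.pc_of_ne (Ne.symm hij) ▸ hj)
    by_cases hjq : j = q
    · by_contra hij
      subst hjq
      exact hentry hj i hij (hs.pc_of_ne hij ▸ hi)
    exact h.privileged_unique i j (hs.pc_of_ne hiq ▸ hi) (hs.pc_of_ne hjq ▸ hj)

theorem step (h : Inv s) (hs : Step q s s') : Inv s' := by
  by_cases hq : Privileged (s.pc q)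
  · exact h.step_of_privileged hs hq
  · exact h.step_of_not_privileged hs hq

end Inv

theorem Exec.inv (e : Exec N) (m : ℕ) : Inv (e.states m) :=
  e.forall_of_stable Inv.init (fun _ _ _ h hs => h.step hs) m

def HoldsTurn (a : Fin N) (s : St N) : Prop :=
  s.turn = .id a ∧
    (s.pc a = .s2 ∨ s.pc a = .s32 ∨ s.pc a = .s352 ∨ s.pc a = .s36 ∨ s.pc a = .s37 ∨
      s.pc a = .s4)

def stepsToCS : PC → ℕ
  | .s352 => 5
  | .s36 => 4
  | .s32 => 3
  | .s2 | .s37 => 2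
  | .s4 => 1
  | _ => 0

namespace HoldsTurn

variable {a q : Fin N} {s s' : St N}

theorem enabled (h : HoldsTurn a s) : Enabled a s := by
  obtain ⟨ht, hpc | hpc | hpc | hpc | hpc | hpc⟩ := h
  · exact ⟨_, .t2id s a a hpc ht⟩
  · exact ⟨_, .t32exit s a hpc (by simp [ht])⟩
  · exact ⟨_, .t352 s a hpc⟩
  · exact ⟨_, .t36yes s a hpc (by simp [ht])⟩
  · exact ⟨_, .t37 s a hpc⟩
  · exact ⟨_, .t4 s a hpc ht⟩

theorem step (h : HoldsTurn a s) (hI : Inv s) (hs : Step q s s') :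
    s'.pc a = .cs ∨ (HoldsTurn a s' ∧ stepsToCS (s'.pc a) ≤ stepsToCS (s.pc a) ∧
      (q = a → stepsToCS (s'.pc a) < stepsToCS (s.pc a))) := by
  obtain ⟨ht, hpc⟩ := h
  by_cases hqa : q = a
  · subst hqa
    cases hs <;> simp_all [stepsToCS, HoldsTurn]
  · have hturn := hs.turn_of_not_privileged (hI.not_privileged_of_turn ht hqa)
    have hpc' := hs.pc_of_ne (Ne.symm hqa)
    exact Or.inr ⟨⟨hturn ▸ ht, hpc' ▸ hpc⟩, hpc' ▸ le_rfl, fun h => absurd h hqa⟩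

end HoldsTurn

theorem holdsTurn_of_assign {p a : Fin N} {s s' : St N} (hs : Step p s s')
    (hassign : (p = a ∧ s.pc p = .s351) ∨
      (s.pc p = .s63 ∧ s.nextTurn p = .id a ∧ (s.pc a = .s2 ∨ s.pc a = .s4))) :
    HoldsTurn a s' := by
  rcases hassign with ⟨rfl, hpc⟩ | ⟨hpc, hnext, hwait⟩
  · cases hs <;> simp_all [HoldsTurn]
  · have hap : a ≠ p := by rintro rfl; rcases hwait with h | h <;> simp_all
    cases hs with
    | t63id _ _ b _ hn =>
      obtain rfl : b = a := by simpa [hn] using hnext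
      exact ⟨rfl, by rcases hwait with h | h <;> simp [Function.update_of_ne hap, h]⟩
    | _ => simp_all

end Sym

open Sym in
/-- **Lemma: a process with the turn enters the critical section
(symmetric algorithm).** In every fair execution, if at some step `n` the
shared variable `turn` is assigned the value `a` — either by process `a`
itself taking the transition at state 3.5.1 that sets `turn := a`, or by
some process at state 6.3 with `nextTurn = a` setting `turn := nextTurn`
while process `a` waits at state 2 or state 4 — then process `a` eventually
enters the critical section. -/
theorem sym_process_with_turn_enters {N : ℕ} (e : Exec N) (hfair : e.Fair)
    (n : ℕ) (a : Fin N)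
    (hassign : ∃ p : Fin N, e.sched n = some p ∧
      ((p = a ∧ (e.states n).pc p = PC.s351) ∨
       ((e.states n).pc p = PC.s63 ∧ (e.states n).nextTurn p = Turn.id a ∧
        ((e.states n).pc a = PC.s2 ∨ (e.states n).pc a = PC.s4)))) :
    ∃ m, n < m ∧ (e.states m).pc a = PC.cs := by
  obtain ⟨p, hsched, hcase⟩ := hassign
  have hholds : HoldsTurn a (e.states (n + 1)) :=
    holdsTurn_of_assign (e.step_of_sched_eq_some hsched) hcase
  exact hfair.exists_of_progress (P := fun s => Inv s ∧ HoldsTurn a s)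
    (fun s => stepsToCS (s.pc a))
    (fun _ _ _ ⟨hI, hH⟩ hs => (hH.step hI hs).imp_right fun h => ⟨⟨hI.step hs, h.1⟩, h.2⟩)
    (fun _ hP => hP.2.enabled) ⟨e.inv (n + 1), hholds⟩
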